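/- For the dynamical error model with the KYP/SPR conditions and the gradient update law θ̇ = −γ φ̂ e_y, if α ≥ 4‖Pb‖²‖θ*‖²/(λ_min(Q) λ_min(Q̄)), then the perturbation signal δ(t) = 2 e(t)ᵀP b (θ*ᵀφ̃(t)) decays exponentially: for all t ≥ t₀, |δ(t)| ≤ 2‖Pb‖‖θ*‖ √(V(t₀)/λ_min(P)) · √(λ_max(P̄)/λ_min(P̄)) · exp(−λ_min(Q̄)(t − t₀)/(2 λ_max(P̄))) · ‖φ̃(t₀)‖. -/

import Mathlib

/-!
Along the error model the Lyapunov function `V` is nonincreasing: the gradient law cancels the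
parameter-error term of `V̇`, and the remaining cross term `2 (eᵀPb)(θ*ᵀφ̃)` is absorbed by
`-eᵀQe - α φ̃ᵀQ̄φ̃` through Cauchy–Schwarz and AM-GM, which is where the lower bound on `α` enters.
Hence `λ_min(P) ‖e(t)‖² ≤ V(t₀)`. Independently, `W = φ̃ᵀP̄φ̃` satisfies
`Ẇ = -φ̃ᵀQ̄φ̃ ≤ -(λ_min(Q̄)/λ_max(P̄)) W`, so Grönwall gives exponential decay of `‖φ̃(t)‖`.
Cauchy–Schwarz on both factors of `δ` combines the two bounds.
-/

open Matrix Set Real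

variable {ι : Type*} [Fintype ι]

theorem dotProduct_self_nonneg (x : ι → ℝ) : 0 ≤ x ⬝ᵥ x :=
  Finset.sum_nonneg fun i _ => mul_self_nonneg (x i)

theorem dotProduct_sq_le (x y : ι → ℝ) : (x ⬝ᵥ y) ^ 2 ≤ (x ⬝ᵥ x) * (y ⬝ᵥ y) := by
  simpa only [dotProduct, sq] using Finset.sum_mul_sq_le_sq_mul_sq Finset.univ x y

theorem abs_dotProduct_le (x y : ι → ℝ) : |x ⬝ᵥ y| ≤ √(x ⬝ᵥ x) * √(y ⬝ᵥ y) := by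
  rw [← sqrt_mul (dotProduct_self_nonneg x), ← sqrt_sq_eq_abs]
  exact sqrt_le_sqrt (dotProduct_sq_le x y)

theorem two_mul_dotProduct_mul_dotProduct_le {κ : Type*} [Fintype κ] {x u : ι → ℝ} {y v : κ → ℝ}
    {p r : ℝ} (hp : 0 ≤ p) (hr : 0 ≤ r) (h : 4 * (u ⬝ᵥ u) * (v ⬝ᵥ v) ≤ p * r) :
    2 * (x ⬝ᵥ u) * (y ⬝ᵥ v) ≤ p * (x ⬝ᵥ x) + r * (y ⬝ᵥ y) := by
  have hx := dotProduct_self_nonneg x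
  have hy := dotProduct_self_nonneg y
  have hsum : 0 ≤ p * (x ⬝ᵥ x) + r * (y ⬝ᵥ y) := by positivity
  refine le_of_abs_le (abs_le_of_sq_le_sq ?_ hsum)
  calc (2 * (x ⬝ᵥ u) * (y ⬝ᵥ v)) ^ 2 = 4 * (x ⬝ᵥ u) ^ 2 * (y ⬝ᵥ v) ^ 2 := by ring
    _ ≤ 4 * ((x ⬝ᵥ x) * (u ⬝ᵥ u)) * ((y ⬝ᵥ y) * (v ⬝ᵥ v)) :=
      mul_le_mul (mul_le_mul_of_nonneg_left (dotProduct_sq_le x u) zero_le_four)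
        (dotProduct_sq_le y v) (sq_nonneg _)
        (mul_nonneg zero_le_four (mul_nonneg hx (dotProduct_self_nonneg u)))
    _ = (4 * (u ⬝ᵥ u) * (v ⬝ᵥ v)) * ((x ⬝ᵥ x) * (y ⬝ᵥ y)) := by ring
    _ ≤ p * r * ((x ⬝ᵥ x) * (y ⬝ᵥ y)) := by gcongr
    _ ≤ (p * (x ⬝ᵥ x) + r * (y ⬝ᵥ y)) ^ 2 := by
      nlinarith [sq_nonneg (p * (x ⬝ᵥ x) - r * (y ⬝ᵥ y)),
        mul_nonneg (mul_nonneg hp hr) (mul_nonneg hx hy)]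

theorem Matrix.lyapunov_dotProduct_mulVec {A P Q : Matrix ι ι ℝ} (hLyap : Aᵀ * P + P * A = -Q)
    (x : ι → ℝ) : A *ᵥ x ⬝ᵥ P *ᵥ x + x ⬝ᵥ P *ᵥ (A *ᵥ x) = -(x ⬝ᵥ Q *ᵥ x) := by
  have hAP : A *ᵥ x ⬝ᵥ P *ᵥ x = x ⬝ᵥ (Aᵀ * P) *ᵥ x := by
    rw [← mulVec_mulVec, dotProduct_mulVec x, vecMul_transpose]
  rw [hAP, mulVec_mulVec, ← dotProduct_add, ← add_mulVec, hLyap, neg_mulVec, dotProduct_neg]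

open scoped MatrixOrder Matrix.Norms.L2Operator in
theorem Matrix.PosDef.exists_pos_mul_dotProduct_self_le {Q : Matrix ι ι ℝ} (hQ : Q.PosDef) :
    ∃ r > 0, ∀ x : ι → ℝ, r * (x ⬝ᵥ x) ≤ x ⬝ᵥ Q *ᵥ x := by
  classical
  cases isEmpty_or_nonempty ι
  · exact ⟨1, one_pos, fun x => by simp [dotProduct]⟩
  obtain ⟨r, hr, hle⟩ := (CFC.exists_pos_algebraMap_le_iff hQ.isHermitian).2
    fun _ hx => hQ.isStrictlyPositive.spectrum_pos hx
  refine ⟨r, hr, fun x => ?_⟩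
  simpa [sub_mulVec, Algebra.algebraMap_eq_smul_one, smul_mulVec] using
    (Matrix.le_iff.mp hle).dotProduct_mulVec_nonneg x

theorem Matrix.PosDef.pos_of_isGreatest {Q : Matrix ι ι ℝ} (hQ : Q.PosDef) {lam : ℝ}
    (h : IsGreatest {r : ℝ | ∀ x : ι → ℝ, r * (x ⬝ᵥ x) ≤ x ⬝ᵥ Q *ᵥ x} lam) : 0 < lam :=
  let ⟨_, hr, hrQ⟩ := hQ.exists_pos_mul_dotProduct_self_le
  hr.trans_le (h.2 hrQ)

theorem Matrix.le_of_forall_mul_dotProduct_self_le_of_isLeast {M : Matrix ι ι ℝ} {a b : ℝ}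
    (ha : ∀ x : ι → ℝ, a * (x ⬝ᵥ x) ≤ x ⬝ᵥ M *ᵥ x)
    (hb : IsLeast {r : ℝ | ∀ x : ι → ℝ, x ⬝ᵥ M *ᵥ x ≤ r * (x ⬝ᵥ x)} b) : a ≤ b := by
  classical
  cases isEmpty_or_nonempty ι
  · have : b - 1 ∈ {r : ℝ | ∀ x : ι → ℝ, x ⬝ᵥ M *ᵥ x ≤ r * (x ⬝ᵥ x)} := fun x => by
      simp [dotProduct]
    linarith [hb.2 this]
  · obtain ⟨i⟩ := ‹Nonempty ι›
    have h1 : Pi.single i (1 : ℝ) ⬝ᵥ Pi.single i 1 = 1 := by simp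
    have := (ha (Pi.single i 1)).trans (hb.1 (Pi.single i 1))
    rwa [h1, mul_one, mul_one] at this

theorem HasDerivAt.dotProduct {f g : ℝ → ι → ℝ} {f' g' : ι → ℝ} {t : ℝ}
    (hf : HasDerivAt f f' t) (hg : HasDerivAt g g' t) :
    HasDerivAt (fun s => f s ⬝ᵥ g s) (f' ⬝ᵥ g t + f t ⬝ᵥ g') t :=
  (HasDerivAt.fun_sum fun i _ => (hasDerivAt_pi.mp hf i).mul (hasDerivAt_pi.mp hg i)).congr_deriv
    Finset.sum_add_distrib

theorem HasDerivAt.const_mulVec {m : Type*} (M : Matrix m ι ℝ) {f : ℝ → ι → ℝ} {f' : ι → ℝ}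
    {t : ℝ} (hf : HasDerivAt f f' t) : HasDerivAt (fun s => M *ᵥ f s) (M *ᵥ f') t :=
  hasDerivAt_pi.mpr fun i =>
    HasDerivAt.fun_sum fun j _ => (hasDerivAt_pi.mp hf j).const_mul (M i j)

theorem HasDerivAt.dotProduct_mulVec (M : Matrix ι ι ℝ) {f : ℝ → ι → ℝ} {f' : ι → ℝ} {t : ℝ}
    (hf : HasDerivAt f f' t) :
    HasDerivAt (fun s => f s ⬝ᵥ M *ᵥ f s) (f' ⬝ᵥ M *ᵥ f t + f t ⬝ᵥ M *ᵥ f') t :=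
  hf.dotProduct (hf.const_mulVec M)

theorem le_exp_mul_of_hasDerivAt_le_neg_mul {f f' : ℝ → ℝ} {k t₀ t : ℝ}
    (hf : ∀ s, t₀ ≤ s → HasDerivAt f (f' s) s) (hf' : ∀ s, t₀ ≤ s → f' s ≤ -k * f s)
    (ht : t₀ ≤ t) : f t ≤ exp (-k * (t - t₀)) * f t₀ := by
  have := le_gronwallBound_of_liminf_deriv_right_le (K := -k) (ε := 0) (b := t)
    (fun s hs => (hf s hs.1).continuousAt.continuousWithinAt)
    (fun s hs _ hr => (hf s hs.1).hasDerivWithinAt.liminf_right_slope_le hr) le_rfl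
    (fun s hs => (add_zero (-k * f s)).symm ▸ hf' s hs.1) t ⟨ht, le_rfl⟩
  rwa [gronwallBound_ε0, mul_comm] at this

section ErrorModel

variable {κ : Type*} [Fintype κ] {A P Q : Matrix ι ι ℝ} {b c : ι → ℝ}
  {Λ Pbar Qbar : Matrix κ κ ℝ} {θstar : κ → ℝ} {γ α t : ℝ} {e : ℝ → ι → ℝ}
  {θ φhat φtil : ℝ → κ → ℝ}

/-- The gradient law makes the `θ`-part of `V̇` cancel the term `2 ((θ - θ*)ᵀφ̂) bᵀPe`
contributed by the parameter error. -/
theorem hasDerivAt_errorModel_lyapunov (hγ : γ ≠ 0) (hPsym : P.IsSymm)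
    (hLyap : Aᵀ * P + P * A = -Q) (hPb : P *ᵥ b = c) (hLyapBar : Λᵀ * Pbar + Pbar * Λ = -Qbar)
    (hde : HasDerivAt e (A *ᵥ e t + ((θ t - θstar) ⬝ᵥ φhat t) • b + (θstar ⬝ᵥ φtil t) • b) t)
    (hdφ : HasDerivAt φtil (Λ *ᵥ φtil t) t)
    (hdθ : HasDerivAt θ ((-(γ * (c ⬝ᵥ e t))) • φhat t) t) :
    HasDerivAt (fun s => γ⁻¹ * ((θ s - θstar) ⬝ᵥ (θ s - θstar)) + e s ⬝ᵥ P *ᵥ e s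
        + α * (φtil s ⬝ᵥ Pbar *ᵥ φtil s))
      (-(e t ⬝ᵥ Q *ᵥ e t) + 2 * (e t ⬝ᵥ P *ᵥ b) * (θstar ⬝ᵥ φtil t)
        - α * (φtil t ⬝ᵥ Qbar *ᵥ φtil t)) t := by
  have hθ := hdθ.sub_const θstar
  refine ((((hθ.dotProduct hθ).const_mul γ⁻¹).add (hde.dotProduct_mulVec P)).add
    ((hdφ.dotProduct_mulVec Pbar).const_mul α)).congr_deriv ?_
  have hc : c ⬝ᵥ e t = e t ⬝ᵥ P *ᵥ b := by rw [← hPb, dotProduct_comm]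
  have hbPe : b ⬝ᵥ P *ᵥ e t = e t ⬝ᵥ P *ᵥ b := by
    rw [dotProduct_mulVec, ← mulVec_transpose, hPsym.eq, dotProduct_comm]
  have hA := Matrix.lyapunov_dotProduct_mulVec hLyap (e t)
  have hB := Matrix.lyapunov_dotProduct_mulVec hLyapBar (φtil t)
  simp only [mulVec_add, mulVec_smul, add_dotProduct, dotProduct_add, smul_dotProduct,
    dotProduct_smul, smul_eq_mul]
  rw [hbPe, hc, dotProduct_comm (φhat t)]
  linear_combination hA + α * hB
    + (-2 * (e t ⬝ᵥ P *ᵥ b) * ((θ t - θstar) ⬝ᵥ φhat t)) * inv_mul_cancel₀ hγ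

theorem errorModel_lyapunov_antitoneOn {t₀ lamQ lamQbar : ℝ} (hγ : γ ≠ 0) (hα : 0 ≤ α)
    (hPsym : P.IsSymm) (hLyap : Aᵀ * P + P * A = -Q) (hPb : P *ᵥ b = c)
    (hLyapBar : Λᵀ * Pbar + Pbar * Λ = -Qbar)
    (hQ : ∀ x, lamQ * (x ⬝ᵥ x) ≤ x ⬝ᵥ Q *ᵥ x) (hQbar : ∀ x, lamQbar * (x ⬝ᵥ x) ≤ x ⬝ᵥ Qbar *ᵥ x)
    (hlamQ : 0 ≤ lamQ) (hlamQbar : 0 ≤ lamQbar)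
    (hαbig : 4 * (P *ᵥ b ⬝ᵥ P *ᵥ b) * (θstar ⬝ᵥ θstar) ≤ lamQ * (α * lamQbar))
    (hde : ∀ s, t₀ ≤ s → HasDerivAt e
      (A *ᵥ e s + ((θ s - θstar) ⬝ᵥ φhat s) • b + (θstar ⬝ᵥ φtil s) • b) s)
    (hdφ : ∀ s, t₀ ≤ s → HasDerivAt φtil (Λ *ᵥ φtil s) s)
    (hdθ : ∀ s, t₀ ≤ s → HasDerivAt θ ((-(γ * (c ⬝ᵥ e s))) • φhat s) s) :
    AntitoneOn (fun s => γ⁻¹ * ((θ s - θstar) ⬝ᵥ (θ s - θstar)) + e s ⬝ᵥ P *ᵥ e s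
        + α * (φtil s ⬝ᵥ Pbar *ᵥ φtil s)) (Ici t₀) := by
  have hderiv s (hs : t₀ ≤ s) := hasDerivAt_errorModel_lyapunov (α := α) hγ hPsym hLyap hPb
    hLyapBar (hde s hs) (hdφ s hs) (hdθ s hs)
  refine antitoneOn_of_hasDerivWithinAt_nonpos (convex_Ici t₀)
    (fun s hs => (hderiv s hs).continuousAt.continuousWithinAt)
    (fun s hs => (hderiv s (interior_subset hs)).hasDerivWithinAt) fun s _ => ?_
  have hcross := two_mul_dotProduct_mul_dotProduct_le (x := e s) (y := φtil s) hlamQ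
    (mul_nonneg hα hlamQbar) hαbig
  rw [dotProduct_comm (φtil s)] at hcross
  nlinarith [hQ (e s), hQbar (φtil s)]

end ErrorModel

theorem sqrt_dotProduct_self_le_exp_of_lyapunov {Λ Pbar Qbar : Matrix ι ι ℝ} {φ : ℝ → ι → ℝ}
    {lamQ lamMin lamMax t₀ t : ℝ}
    (hLyap : Λᵀ * Pbar + Pbar * Λ = -Qbar) (hdφ : ∀ s, t₀ ≤ s → HasDerivAt φ (Λ *ᵥ φ s) s)
    (hQ : ∀ x, lamQ * (x ⬝ᵥ x) ≤ x ⬝ᵥ Qbar *ᵥ x) (hmin : ∀ x, lamMin * (x ⬝ᵥ x) ≤ x ⬝ᵥ Pbar *ᵥ x)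
    (hmax : ∀ x, x ⬝ᵥ Pbar *ᵥ x ≤ lamMax * (x ⬝ᵥ x)) (hlamQ : 0 ≤ lamQ) (hmin0 : 0 < lamMin)
    (hmax0 : 0 < lamMax) (ht : t₀ ≤ t) :
    √(φ t ⬝ᵥ φ t) ≤ √(lamMax / lamMin) * exp (-(lamQ * (t - t₀)) / (2 * lamMax))
      * √(φ t₀ ⬝ᵥ φ t₀) := by
  set E := exp (-(lamQ * (t - t₀)) / (2 * lamMax))
  have hW : φ t ⬝ᵥ Pbar *ᵥ φ t ≤ exp (-(lamQ / lamMax) * (t - t₀)) * (φ t₀ ⬝ᵥ Pbar *ᵥ φ t₀) := by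
    refine le_exp_mul_of_hasDerivAt_le_neg_mul (fun s hs => (hdφ s hs).dotProduct_mulVec Pbar)
      (fun s _ => ?_) ht
    rw [Matrix.lyapunov_dotProduct_mulVec hLyap]
    have h := mul_le_mul_of_nonneg_left (hmax (φ s)) (div_nonneg hlamQ hmax0.le)
    rw [← mul_assoc, div_mul_cancel₀ _ hmax0.ne'] at h
    linarith [hQ (φ s)]
  have hE : exp (-(lamQ / lamMax) * (t - t₀)) = E ^ 2 := by
    rw [sq, ← exp_add]; congr 1; field_simp; ring
  have hφ : φ t ⬝ᵥ φ t ≤ lamMax / lamMin * E ^ 2 * (φ t₀ ⬝ᵥ φ t₀) := by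
    rw [div_mul_eq_mul_div, div_mul_eq_mul_div, le_div_iff₀ hmin0, mul_comm]
    calc lamMin * (φ t ⬝ᵥ φ t) ≤ φ t ⬝ᵥ Pbar *ᵥ φ t := hmin (φ t)
      _ ≤ E ^ 2 * (lamMax * (φ t₀ ⬝ᵥ φ t₀)) :=
        hE ▸ hW.trans (mul_le_mul_of_nonneg_left (hmax (φ t₀)) (exp_pos _).le)
      _ = lamMax * E ^ 2 * (φ t₀ ⬝ᵥ φ t₀) := by ring
  calc √(φ t ⬝ᵥ φ t) ≤ √(lamMax / lamMin * E ^ 2 * (φ t₀ ⬝ᵥ φ t₀)) := sqrt_le_sqrt hφ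
    _ = √(lamMax / lamMin) * E * √(φ t₀ ⬝ᵥ φ t₀) := by
      rw [sqrt_mul (by positivity), sqrt_mul (by positivity), sqrt_sq (exp_pos _).le]

theorem kyp_perturbation_exponential_decay_general
    {n N : ℕ} (t₀ γ α : ℝ) (hγ : 0 < γ) (hα : 0 < α)
    (A : Matrix (Fin n) (Fin n) ℝ) (b c : Fin n → ℝ)
    (P Q : Matrix (Fin n) (Fin n) ℝ)
    (hPsym : P.IsSymm) (hP : P.PosDef) (hQ : Q.PosDef)
    (hLyap : Aᵀ * P + P * A = -Q) (hPb : P.mulVec b = c)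
    (Λ Pbar Qbar : Matrix (Fin N) (Fin N) ℝ)
    (hPbar : Pbar.PosDef)
    (hQbar : Qbar.PosDef)
    (hLyapBar : Λᵀ * Pbar + Pbar * Λ = -Qbar)
    (lamQ lamQbar : ℝ)
    (hlamQ : IsGreatest {r : ℝ | ∀ x : Fin n → ℝ, r * (x ⬝ᵥ x) ≤ x ⬝ᵥ Q.mulVec x} lamQ)
    (hlamQbar : IsGreatest
      {r : ℝ | ∀ x : Fin N → ℝ, r * (x ⬝ᵥ x) ≤ x ⬝ᵥ Qbar.mulVec x} lamQbar)
    (θstar : Fin N → ℝ)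
    (hαbig : 4 * (P.mulVec b ⬝ᵥ P.mulVec b) * (θstar ⬝ᵥ θstar) / (lamQ * lamQbar) ≤ α)
    (e : ℝ → Fin n → ℝ) (θ φhat φtil : ℝ → Fin N → ℝ)
    (ey : ℝ → ℝ) (hey : ∀ t, ey t = c ⬝ᵥ e t)
    (hde : ∀ t, t₀ ≤ t → HasDerivAt e
      (A.mulVec (e t) + ((θ t - θstar) ⬝ᵥ φhat t) • b + (θstar ⬝ᵥ φtil t) • b) t)
    (hdφ : ∀ t, t₀ ≤ t → HasDerivAt φtil (Λ.mulVec (φtil t)) t)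
    (hdθ : ∀ t, t₀ ≤ t → HasDerivAt θ ((-(γ * ey t)) • φhat t) t)
    (V : ℝ → ℝ)
    (hV : ∀ t, V t = γ⁻¹ * ((θ t - θstar) ⬝ᵥ (θ t - θstar))
      + e t ⬝ᵥ P.mulVec (e t) + α * (φtil t ⬝ᵥ Pbar.mulVec (φtil t)))     (lamMinP lamMinPbar lamMaxPbar : ℝ)
    (hlamMinP : IsGreatest
      {r : ℝ | ∀ x : Fin n → ℝ, r * (x ⬝ᵥ x) ≤ x ⬝ᵥ P.mulVec x} lamMinP)
    (hlamMinPbar : IsGreatest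
      {r : ℝ | ∀ x : Fin N → ℝ, r * (x ⬝ᵥ x) ≤ x ⬝ᵥ Pbar.mulVec x} lamMinPbar)
    (hlamMaxPbar : IsLeast
      {r : ℝ | ∀ x : Fin N → ℝ, x ⬝ᵥ Pbar.mulVec x ≤ r * (x ⬝ᵥ x)} lamMaxPbar)
    (δ : ℝ → ℝ)
    (hδ : ∀ t, δ t = 2 * (e t ⬝ᵥ P.mulVec b) * (θstar ⬝ᵥ φtil t)) :
    ∀ t, t₀ ≤ t →
      |δ t| ≤ 2 * Real.sqrt (P.mulVec b ⬝ᵥ P.mulVec b) * Real.sqrt (θstar ⬝ᵥ θstar)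
        * Real.sqrt (V t₀ / lamMinP)
        * Real.sqrt (lamMaxPbar / lamMinPbar)
        * Real.exp (-(lamQbar * (t - t₀)) / (2 * lamMaxPbar))
        * Real.sqrt (φtil t₀ ⬝ᵥ φtil t₀) := by
  intro t ht
  have hlamQ0 := hQ.pos_of_isGreatest hlamQ
  have hlamQbar0 := hQbar.pos_of_isGreatest hlamQbar
  have hlamMinP0 := hP.pos_of_isGreatest hlamMinP
  have hlamMinPbar0 := hPbar.pos_of_isGreatest hlamMinPbar
  have hlamMaxPbar0 := hlamMinPbar0.trans_le
    (Matrix.le_of_forall_mul_dotProduct_self_le_of_isLeast hlamMinPbar.1 hlamMaxPbar)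
  have hVt : V t ≤ V t₀ := by
    rw [div_le_iff₀ (by positivity), mul_left_comm] at hαbig
    simp only [hV]
    exact errorModel_lyapunov_antitoneOn hγ.ne' hα.le hPsym hLyap hPb hLyapBar hlamQ.1 hlamQbar.1
      hlamQ0.le hlamQbar0.le hαbig hde hdφ (fun s hs => hey s ▸ hdθ s hs) self_mem_Ici ht ht
  have he : √(e t ⬝ᵥ e t) ≤ √(V t₀ / lamMinP) := by
    refine sqrt_le_sqrt ((le_div_iff₀' hlamMinP0).2 ((hlamMinP.1 (e t)).trans ?_))
    have hθ := mul_nonneg (inv_nonneg.2 hγ.le) (dotProduct_self_nonneg (θ t - θstar))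
    have hφ := mul_nonneg hα.le <|
      (mul_nonneg hlamMinPbar0.le (dotProduct_self_nonneg _)).trans (hlamMinPbar.1 (φtil t))
    linarith [hV t]
  have hφ := sqrt_dotProduct_self_le_exp_of_lyapunov hLyapBar hdφ hlamQbar.1 hlamMinPbar.1
    hlamMaxPbar.1 hlamQbar0.le hlamMinPbar0 hlamMaxPbar0 ht
  rw [hδ, abs_mul, abs_mul, abs_two]
  calc 2 * |e t ⬝ᵥ P *ᵥ b| * |θstar ⬝ᵥ φtil t|
      ≤ 2 * (√(e t ⬝ᵥ e t) * √(P *ᵥ b ⬝ᵥ P *ᵥ b)) * (√(θstar ⬝ᵥ θstar) * √(φtil t ⬝ᵥ φtil t)) := by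
        gcongr <;> exact abs_dotProduct_le _ _
    _ ≤ 2 * (√(V t₀ / lamMinP) * √(P *ᵥ b ⬝ᵥ P *ᵥ b)) * (√(θstar ⬝ᵥ θstar)
        * (√(lamMaxPbar / lamMinPbar) * exp (-(lamQbar * (t - t₀)) / (2 * lamMaxPbar))
          * √(φtil t₀ ⬝ᵥ φtil t₀))) := by gcongr
    _ = _ := by ring

/-- For the dynamical error model with the KYP/SPR conditions and the gradient
update law `θ̇ = -γ φ̂ e_y`, if `α ≥ 4‖Pb‖²‖θ*‖²/(λ_min(Q) λ_min(Q̄))`, then the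
perturbation signal `δ(t) = 2 e(t)ᵀPb (θ*ᵀφ̃(t))` decays exponentially:
`|δ(t)| ≤ 2‖Pb‖‖θ*‖ √(V(t₀)/λ_min(P)) √(λ_max(P̄)/λ_min(P̄))
  exp(-λ_min(Q̄)(t-t₀)/(2λ_max(P̄))) ‖φ̃(t₀)‖` for all `t ≥ t₀`. -/
theorem kyp_perturbation_exponential_decay
    {n N : ℕ} (t₀ γ α : ℝ) (hγ : 0 < γ) (hα : 0 < α)
    (A : Matrix (Fin n) (Fin n) ℝ) (b c : Fin n → ℝ)
    (P Q : Matrix (Fin n) (Fin n) ℝ)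
    (hPsym : P.IsSymm) (hP : P.PosDef) (hQsym : Q.IsSymm) (hQ : Q.PosDef)
    (hLyap : Aᵀ * P + P * A = -Q) (hPb : P.mulVec b = c)
    (Λ Pbar Qbar : Matrix (Fin N) (Fin N) ℝ)
    (hPbarSym : Pbar.IsSymm) (hPbar : Pbar.PosDef)
    (hQbarSym : Qbar.IsSymm) (hQbar : Qbar.PosDef)
    (hLyapBar : Λᵀ * Pbar + Pbar * Λ = -Qbar)
    (lamQ lamQbar : ℝ)
    (hlamQ : IsGreatest {r : ℝ | ∀ x : Fin n → ℝ, r * (x ⬝ᵥ x) ≤ x ⬝ᵥ Q.mulVec x} lamQ)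
    (hlamQbar : IsGreatest
      {r : ℝ | ∀ x : Fin N → ℝ, r * (x ⬝ᵥ x) ≤ x ⬝ᵥ Qbar.mulVec x} lamQbar)
    (θstar : Fin N → ℝ)
    (hαbig : 4 * (P.mulVec b ⬝ᵥ P.mulVec b) * (θstar ⬝ᵥ θstar) / (lamQ * lamQbar) ≤ α)
    (e : ℝ → Fin n → ℝ) (θ φhat φtil : ℝ → Fin N → ℝ)
    (ey : ℝ → ℝ) (hey : ∀ t, ey t = c ⬝ᵥ e t)
    (hde : ∀ t, t₀ ≤ t → HasDerivAt e
      (A.mulVec (e t) + ((θ t - θstar) ⬝ᵥ φhat t) • b + (θstar ⬝ᵥ φtil t) • b) t)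
    (hdφ : ∀ t, t₀ ≤ t → HasDerivAt φtil (Λ.mulVec (φtil t)) t)
    (hdθ : ∀ t, t₀ ≤ t → HasDerivAt θ ((-(γ * ey t)) • φhat t) t)
    (V : ℝ → ℝ)
    (hV : ∀ t, V t = γ⁻¹ * ((θ t - θstar) ⬝ᵥ (θ t - θstar))
      + e t ⬝ᵥ P.mulVec (e t) + α * (φtil t ⬝ᵥ Pbar.mulVec (φtil t)))     (lamMinP lamMinPbar lamMaxPbar : ℝ)
    (hlamMinP : IsGreatest
      {r : ℝ | ∀ x : Fin n → ℝ, r * (x ⬝ᵥ x) ≤ x ⬝ᵥ P.mulVec x} lamMinP)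
    (hlamMinPbar : IsGreatest
      {r : ℝ | ∀ x : Fin N → ℝ, r * (x ⬝ᵥ x) ≤ x ⬝ᵥ Pbar.mulVec x} lamMinPbar)
    (hlamMaxPbar : IsLeast
      {r : ℝ | ∀ x : Fin N → ℝ, x ⬝ᵥ Pbar.mulVec x ≤ r * (x ⬝ᵥ x)} lamMaxPbar)
    (δ : ℝ → ℝ)
    (hδ : ∀ t, δ t = 2 * (e t ⬝ᵥ P.mulVec b) * (θstar ⬝ᵥ φtil t)) :
    ∀ t, t₀ ≤ t →
      |δ t| ≤ 2 * Real.sqrt (P.mulVec b ⬝ᵥ P.mulVec b) * Real.sqrt (θstar ⬝ᵥ θstar)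
        * Real.sqrt (V t₀ / lamMinP)
        * Real.sqrt (lamMaxPbar / lamMinPbar)
        * Real.exp (-(lamQbar * (t - t₀)) / (2 * lamMaxPbar))
        * Real.sqrt (φtil t₀ ⬝ᵥ φtil t₀) :=
  kyp_perturbation_exponential_decay_general t₀ γ α hγ hα A b c P Q hPsym hP hQ hLyap hPb Λ Pbar
    Qbar hPbar hQbar hLyapBar lamQ lamQbar hlamQ hlamQbar θstar hαbig e θ φhat φtil ey hey hde hdφ
    hdθ V hV lamMinP lamMinPbar lamMaxPbar hlamMinP hlamMinPbar hlamMaxPbar δ hδ
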